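/- arXiv:2512.06640 — 4 statements merged into one kernel-verified Lean document; each statement's English description precedes it below -/
import Mathlib

section
/- Let $(Z_n)_{n \ge 0}$ be a Galton–Watson branching process with $Z_0 = 1$ whose offspring distribution has probability generating function $f$ satisfying $f(s) \le \exp(\lambda(e^{t(s-1)} - 1))$ for all $s \in [1, \infty)$ with $\lambda t < 1$. Then there exists $s_0 > 1$ such that $\mathbb{E}[s_0^{T}] < \infty$, where $T = \sum_{n \ge 0} Z_n$ is the total progeny. -/
open MeasureTheory ProbabilityTheory ENNReal Filter Topology

section GWAux

variable {Ω : Type*} [MeasurableSpace Ω] {P : Measure Ω} [IsProbabilityMeasure P]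
  {ξ : ℕ → ℕ → Ω → ℕ}

/-- The σ-algebra generated by a set of the offspring variables `ξ`. -/
def mS (ξ : ℕ → ℕ → Ω → ℕ) (S : Set (ℕ × ℕ)) : MeasurableSpace Ω :=
  ⨆ p ∈ S, MeasurableSpace.comap (ξ p.1 p.2) ⊤

omit [MeasurableSpace Ω] in
lemma mS_mono {S T : Set (ℕ × ℕ)} (h : S ⊆ T) : mS ξ S ≤ mS ξ T :=
  iSup_le fun p => iSup_le fun hp =>
    le_iSup₂ (f := fun p (_ : p ∈ T) => MeasurableSpace.comap (ξ p.1 p.2) ⊤) p (h hp)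

omit [MeasurableSpace Ω] in
lemma xi_meas_mS {S : Set (ℕ × ℕ)} {n i : ℕ} (h : (n, i) ∈ S) :
    Measurable[mS ξ S] (ξ n i) := by
  have h1 : MeasurableSpace.comap (ξ n i) ⊤ ≤ mS ξ S :=
    le_iSup₂ (f := fun p (_ : p ∈ S) => MeasurableSpace.comap (ξ p.1 p.2) ⊤) (n, i) h
  exact (Measurable.of_comap_le le_rfl).mono h1 le_rfl

lemma aux_indep (hξmeas : ∀ n i, Measurable (ξ n i))
    (hξindep : iIndepFun (fun p : ℕ × ℕ => ξ p.1 p.2) P)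
    {S T : Set (ℕ × ℕ)} (hST : Disjoint S T) {f g : Ω → ℝ≥0∞}
    (hf : Measurable[mS ξ S] f) (hg : Measurable[mS ξ T] g) :
    ∫⁻ ω, f ω * g ω ∂P = (∫⁻ ω, f ω ∂P) * ∫⁻ ω, g ω ∂P := by
  have hξ' : iIndep (fun p : ℕ × ℕ => MeasurableSpace.comap (ξ p.1 p.2) ⊤) P :=
    (iIndepFun_iff_iIndep _ _ _).mp hξindep
  have hind : Indep (mS ξ S) (mS ξ T) P :=
    indep_iSup_of_disjoint (m := fun p : ℕ × ℕ => MeasurableSpace.comap (ξ p.1 p.2) ⊤)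
      (fun p => (hξmeas p.1 p.2).comap_le) hξ' hST
  exact lintegral_mul_eq_lintegral_mul_lintegral_of_independent_measurableSpace
    (Mf := mS ξ S) (Mg := mS ξ T)
    (iSup_le fun p => iSup_le fun _ => (hξmeas p.1 p.2).comap_le)
    (iSup_le fun p => iSup_le fun _ => (hξmeas p.1 p.2).comap_le) hind hf hg

omit [IsProbabilityMeasure P] in
lemma aux_single (μ : ℕ → ℝ≥0∞)
    (hξdist : ∀ n i k, P {ω | ξ n i ω = k} = μ k) (hξmeas : ∀ n i, Measurable (ξ n i))
    (y : ℝ≥0∞) (n i : ℕ) :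
    ∫⁻ ω, y ^ ξ n i ω ∂P = ∑' k, μ k * y ^ k := by
  rw [← lintegral_map (f := fun k : ℕ => y ^ k) (by exact measurable_from_top) (hξmeas n i),
    lintegral_countable']
  congr 1
  ext k
  rw [Measure.map_apply (hξmeas n i) (measurableSet_singleton k)]
  have : ξ n i ⁻¹' {k} = {ω | ξ n i ω = k} := rfl
  rw [this, hξdist, mul_comm]

lemma aux_prod (μ : ℕ → ℝ≥0∞)
    (hξmeas : ∀ n i, Measurable (ξ n i))
    (hξdist : ∀ n i k, P {ω | ξ n i ω = k} = μ k)
    (hξindep : iIndepFun (fun p : ℕ × ℕ => ξ p.1 p.2) P)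
    (y : ℝ≥0∞) (n m : ℕ) :
    ∫⁻ ω, ∏ i ∈ Finset.range m, y ^ ξ n i ω ∂P = (∑' k, μ k * y ^ k) ^ m := by
  induction m with
  | zero => simp
  | succ m ih =>
    have hstep : ∫⁻ ω, ∏ i ∈ Finset.range (m+1), y ^ ξ n i ω ∂P
        = (∫⁻ ω, ∏ i ∈ Finset.range m, y ^ ξ n i ω ∂P) * ∫⁻ ω, y ^ ξ n m ω ∂P := by
      have heq : ∀ ω, ∏ i ∈ Finset.range (m+1), y ^ ξ n i ω
          = (∏ i ∈ Finset.range m, y ^ ξ n i ω) * y ^ ξ n m ω :=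
        fun ω => Finset.prod_range_succ _ m
      rw [lintegral_congr heq]
      refine aux_indep hξmeas hξindep
        (S := {p : ℕ × ℕ | p.1 = n ∧ p.2 < m}) (T := {(n, m)}) ?_ ?_ ?_
      · rw [Set.disjoint_left]
        rintro ⟨a, b⟩ ⟨rfl, hb⟩ hmem
        simp only [Set.mem_singleton_iff, Prod.mk.injEq] at hmem
        omega
      · refine Finset.measurable_prod _ fun i hi => ?_
        exact (measurable_from_top (f := fun k : ℕ => y ^ k)).comp
          (xi_meas_mS ⟨rfl, Finset.mem_range.mp hi⟩)
      · exact (measurable_from_top (f := fun k : ℕ => y ^ k)).comp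
          (xi_meas_mS rfl)
    rw [hstep, ih, aux_single μ hξdist hξmeas, pow_succ]

lemma Z_meas {Z : ℕ → Ω → ℕ}
    (hZ0 : ∀ ω, Z 0 ω = 1)
    (hZsucc : ∀ n ω, Z (n + 1) ω = ∑ i ∈ Finset.range (Z n ω), ξ n i ω) :
    ∀ n, Measurable[mS ξ {p : ℕ × ℕ | p.1 < n}] (Z n) := by
  intro n
  induction n with
  | zero =>
    have : Z 0 = fun _ => 1 := funext hZ0
    rw [this]; exact measurable_const
  | succ n ih =>
    letI m' : MeasurableSpace Ω := mS ξ {p : ℕ × ℕ | p.1 < n + 1}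
    have hZn : Measurable[m'] (Z n) :=
      ih.mono (mS_mono fun p hp => Nat.lt_succ_of_lt hp) le_rfl
    have hsum : ∀ m : ℕ, Measurable[m'] (fun ω => ∑ i ∈ Finset.range m, ξ n i ω) :=
      fun m => Finset.measurable_sum _ fun i _ =>
        xi_meas_mS (show (n, i).1 < n + 1 from Nat.lt_succ_self n)
    have hZe : Z (n+1) = fun ω => ∑ i ∈ Finset.range (Z n ω), ξ n i ω := funext (hZsucc n)
    rw [hZe]
    refine @measurable_to_countable' ℕ Ω _ _ m' _ fun k => ?_
    have hset : (fun ω => ∑ i ∈ Finset.range (Z n ω), ξ n i ω) ⁻¹' {k}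
        = ⋃ m, ({ω | Z n ω = m} ∩ {ω | ∑ i ∈ Finset.range m, ξ n i ω = k}) := by
      ext ω
      simp only [Set.mem_preimage, Set.mem_singleton_iff, Set.mem_iUnion, Set.mem_inter_iff,
        Set.mem_setOf_eq]
      exact ⟨fun h => ⟨Z n ω, rfl, h⟩, by rintro ⟨m, rfl, h⟩; exact h⟩
    rw [hset]
    exact MeasurableSet.iUnion fun m =>
      (hZn (measurableSet_singleton m)).inter ((hsum m) (measurableSet_singleton k))

lemma aux_analytic (lam t : ℝ) (hlam : 0 < lam) (ht : 0 < t) (hsub : lam*t < 1) :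
    ∃ s b : ℝ, 1 < s ∧ 1 < b ∧ Real.exp (lam * (Real.exp (t*(s*b-1)) - 1)) ≤ b := by
  set F : ℝ → ℝ := fun y => Real.exp (lam * (Real.exp (t*(y-1)) - 1)) with hF
  have hd : HasDerivAt F (lam*t) 1 := by
    have h1 : HasDerivAt (fun y : ℝ => t*(y-1)) t 1 := by
      simpa using ((hasDerivAt_id (1:ℝ)).sub_const 1).const_mul t
    have h2 : HasDerivAt (fun y : ℝ => lam * (Real.exp (t*(y-1)) - 1)) (lam*t) 1 := by
      simpa using ((h1.exp).sub_const 1).const_mul lam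
    simpa using h2.exp
  have hF1 : F 1 = 1 := by simp [hF]
  have hslope : Tendsto (slope F 1) (𝓝[>] 1) (𝓝 (lam*t)) :=
    (hasDerivAt_iff_tendsto_slope.1 hd).mono_left
      (nhdsWithin_mono _ (fun x hx => ne_of_gt hx))
  have hev : ∀ᶠ y in 𝓝[>] (1:ℝ), slope F 1 y < 1 :=
    hslope.eventually_lt_const hsub
  obtain ⟨b, hbs, hb1⟩ := (hev.and eventually_mem_nhdsWithin).exists
  rw [Set.mem_Ioi] at hb1
  have hFb : F b < b := by
    have h := hbs
    rw [slope_def_field, hF1] at h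
    have hb1' : (0:ℝ) < b - 1 := by linarith
    rw [div_lt_one hb1'] at h
    linarith
  have hcont : ContinuousAt F b := by fun_prop
  have hev2 : ∀ᶠ z in 𝓝 b, F z < b := hcont.eventually_lt_const hFb
  obtain ⟨δ, hδ, hball⟩ := Metric.eventually_nhds_iff.1 hev2
  have hbpos : (0:ℝ) < b := by linarith
  have hq : 0 < δ/(2*b) := by positivity
  refine ⟨1 + δ/(2*b), b, by linarith, hb1, ?_⟩
  have hz : dist ((1 + δ/(2*b)) * b) b < δ := by
    rw [Real.dist_eq]
    have : (1 + δ/(2*b)) * b - b = δ/2 := by field_simp; ring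
    rw [this, abs_of_pos (by linarith)]
    linarith
  exact le_of_lt (hball hz)

end GWAux

/-- Subcritical Galton–Watson process (offspring pgf dominated by
`exp(λ(e^{t(s-1)} - 1))` with `λ t < 1`): the total progeny `T = ∑ₙ Zₙ` has a finite
exponential moment, i.e. `E[s₀ ^ T] < ∞` for some `s₀ > 1`. -/
theorem gw_total_progeny_exponential_moment
    {Ω : Type*} [MeasurableSpace Ω] (P : Measure Ω) [IsProbabilityMeasure P]
    (μ : ℕ → ℝ≥0∞) (hμ : ∑' k, μ k = 1)
    (ξ : ℕ → ℕ → Ω → ℕ) (hξmeas : ∀ n i, Measurable (ξ n i))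
    (hξdist : ∀ n i k, P {ω | ξ n i ω = k} = μ k)
    (hξindep : iIndepFun
      (fun p : ℕ × ℕ => ξ p.1 p.2) P)
    (Z : ℕ → Ω → ℕ)
    (hZ0 : ∀ ω, Z 0 ω = 1)
    (hZsucc : ∀ n ω, Z (n + 1) ω = ∑ i ∈ Finset.range (Z n ω), ξ n i ω)
    (lam t : ℝ) (hlam : 0 < lam) (ht : 0 < t) (hsub : lam * t < 1)
    (hpgf : ∀ s : ℝ, 1 ≤ s →
      ∑' k, μ k * ENNReal.ofReal (s ^ k) ≤
        ENNReal.ofReal (Real.exp (lam * (Real.exp (t * (s - 1)) - 1)))) :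
    ∃ s₀ : ℝ, 1 < s₀ ∧
      ∫⁻ ω, (⨆ N : ℕ, ENNReal.ofReal (s₀ ^ (∑ n ∈ Finset.range N, Z n ω))) ∂P < ⊤ := by
  obtain ⟨s, b, hs1, hb1, hfb⟩ := aux_analytic lam t hlam ht hsub
  refine ⟨s, hs1, ?_⟩
  have hs0 : (0:ℝ) ≤ s := by linarith
  set s' : ℝ≥0∞ := ENNReal.ofReal s with hs'
  set B : ℝ≥0∞ := ENNReal.ofReal b with hB
  set φ : ℝ≥0∞ → ℝ≥0∞ := fun y => ∑' k, μ k * y ^ k with hφ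
  set T : ℕ → Ω → ℕ := fun N ω => ∑ n ∈ Finset.range N, Z n ω with hT
  have hs'1 : 1 ≤ s' := by
    rw [hs', ← ENNReal.ofReal_one]; exact ENNReal.ofReal_le_ofReal hs1.le
  have hB1 : 1 ≤ B := by
    rw [hB, ← ENNReal.ofReal_one]; exact ENNReal.ofReal_le_ofReal hb1.le
  have hφmono : ∀ {y y' : ℝ≥0∞}, y ≤ y' → φ y ≤ φ y' := fun h =>
    ENNReal.tsum_le_tsum fun k => mul_le_mul_right (pow_le_pow_left' h k) _
  have hφ1 : ∀ y : ℝ≥0∞, 1 ≤ y → 1 ≤ φ y := by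
    intro y hy
    calc (1:ℝ≥0∞) = ∑' k, μ k := hμ.symm
    _ ≤ φ y := ENNReal.tsum_le_tsum fun k => by
        calc μ k = μ k * 1 := (mul_one _).symm
        _ ≤ μ k * y ^ k := mul_le_mul_right (one_le_pow_of_one_le' hy k) _
  have hfix : φ (s' * B) ≤ B := by
    have h1sb : (1:ℝ) ≤ s * b := by nlinarith
    have hsb : s' * B = ENNReal.ofReal (s * b) := (ENNReal.ofReal_mul hs0).symm
    rw [hsb]
    calc φ (ENNReal.ofReal (s * b)) = ∑' k, μ k * ENNReal.ofReal ((s * b) ^ k) := by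
          refine tsum_congr fun k => ?_
          rw [ENNReal.ofReal_pow (by linarith)]
    _ ≤ ENNReal.ofReal (Real.exp (lam * (Real.exp (t * (s * b - 1)) - 1))) := hpgf _ h1sb
    _ ≤ B := ENNReal.ofReal_le_ofReal hfb
  -- measurability
  have hZmS : ∀ n, Measurable[mS ξ {p : ℕ × ℕ | p.1 < n}] (Z n) := Z_meas hZ0 hZsucc
  have hmSle : ∀ S : Set (ℕ × ℕ), mS ξ S ≤ ‹MeasurableSpace Ω› :=
    fun S => iSup_le fun p => iSup_le fun _ => (hξmeas p.1 p.2).comap_le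
  have hZm : ∀ n, Measurable (Z n) := fun n => (hZmS n).mono (hmSle _) le_rfl
  have hTm : ∀ N, Measurable (T N) := fun N => Finset.measurable_sum _ fun n _ => hZm n
  have hTmS : ∀ M, Measurable[mS ξ {p : ℕ × ℕ | p.1 < M}] (T (M+1)) := by
    intro M
    refine Finset.measurable_sum _ fun n hn => ?_
    have hn' : n ≤ M := Nat.lt_succ_iff.mp (Finset.mem_range.mp hn)
    exact (hZmS n).mono (mS_mono fun p hp => lt_of_lt_of_le hp hn') le_rfl
  -- key induction
  have hKey : ∀ M, ∀ x : ℝ≥0∞, 1 ≤ x → x ≤ B →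
      ∫⁻ ω, s' ^ (T (M+1) ω) * x ^ (Z M ω) ∂P ≤ s' * B := by
    intro M
    induction M with
    | zero =>
      intro x hx1 hxB
      have hpt : ∀ ω, s' ^ (T 1 ω) * x ^ (Z 0 ω) = s' * x := by
        intro ω
        have h1 : T 1 ω = 1 := by simp [hT, hZ0 ω]
        rw [h1, hZ0 ω, pow_one, pow_one]
      calc ∫⁻ ω, s' ^ (T 1 ω) * x ^ (Z 0 ω) ∂P = ∫⁻ _, s' * x ∂P := lintegral_congr hpt
      _ = s' * x := by simp
      _ ≤ s' * B := mul_le_mul_right hxB _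
    | succ M ih =>
      intro x hx1 hxB
      set y : ℝ≥0∞ := s' * x with hy
      have hy1 : 1 ≤ y := one_le_mul hs'1 hx1
      have hyB : y ≤ s' * B := mul_le_mul_right hxB s'
      have hintg : ∀ ω, s' ^ (T (M+2) ω) * x ^ (Z (M+1) ω)
          = s' ^ (T (M+1) ω) * y ^ (Z (M+1) ω) := by
        intro ω
        have hTs : T (M+2) ω = T (M+1) ω + Z (M+1) ω := Finset.sum_range_succ _ _
        rw [hTs, pow_add, hy, mul_pow]
        ring
      rw [lintegral_congr hintg]
      -- partition over the value of Z M
      set A : ℕ → Set Ω := fun m => {ω | Z M ω = m} with hA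
      have hAmem : ∀ m ω, ω ∈ A m ↔ Z M ω = m := fun m ω => Iff.rfl
      have hAmeas : ∀ m, MeasurableSet (A m) := fun m => hZm M (measurableSet_singleton m)
      have hAmS : ∀ m, MeasurableSet[mS ξ {p : ℕ × ℕ | p.1 < M}] (A m) :=
        fun m => hZmS M (measurableSet_singleton m)
      have hpart : ∀ (H : Ω → ℝ≥0∞) (ω : Ω), H ω = ∑' m, (A m).indicator H ω := by
        intro H ω
        rw [tsum_eq_single (Z M ω) (fun m hm => Set.indicator_of_notMem (fun h => hm h.symm) H)]
        exact (Set.indicator_of_mem (show ω ∈ A (Z M ω) from rfl) H).symm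
      set W : ℕ → Ω → ℝ≥0∞ := fun m ω => ∏ i ∈ Finset.range m, y ^ ξ M i ω with hW
      have hdisj : Disjoint {p : ℕ × ℕ | p.1 < M} {p : ℕ × ℕ | p.1 = M} := by
        rw [Set.disjoint_left]
        rintro ⟨a, c⟩ ha hb
        simp only [Set.mem_setOf_eq] at ha hb
        omega
      have hWmS : ∀ m, Measurable[mS ξ {p : ℕ × ℕ | p.1 = M}] (W m) := by
        intro m
        refine Finset.measurable_prod _ fun i _ => ?_
        exact (measurable_from_top (f := fun k : ℕ => y ^ k)).comp
          (xi_meas_mS (show (M, i).1 = M from rfl))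
      have hfmS : ∀ m, Measurable[mS ξ {p : ℕ × ℕ | p.1 < M}]
          ((A m).indicator (fun ω => s' ^ (T (M+1) ω))) := by
        intro m
        exact Measurable.indicator
          ((measurable_from_top (f := fun k : ℕ => s' ^ k)).comp (hTmS M)) (hAmS m)
      have hHmeas : Measurable (fun ω => s' ^ (T (M+1) ω) * y ^ (Z (M+1) ω)) :=
        ((measurable_from_top (f := fun k : ℕ => s' ^ k)).comp (hTm (M+1))).mul
          ((measurable_from_top (f := fun k : ℕ => y ^ k)).comp (hZm (M+1)))
      have hHmeas' : Measurable (fun ω => s' ^ (T (M+1) ω) * (φ y) ^ (Z M ω)) :=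
        ((measurable_from_top (f := fun k : ℕ => s' ^ k)).comp (hTm (M+1))).mul
          ((measurable_from_top (f := fun k : ℕ => (φ y) ^ k)).comp (hZm M))
      -- termwise identity
      have hterm : ∀ m, (A m).indicator (fun ω => s' ^ (T (M+1) ω) * y ^ (Z (M+1) ω))
          = fun ω => ((A m).indicator (fun ω' => s' ^ (T (M+1) ω')) ω) * W m ω := by
        intro m
        funext ω
        by_cases hω : ω ∈ A m
        · rw [Set.indicator_of_mem hω, Set.indicator_of_mem hω]
          have hZM : Z M ω = m := hω
          have hZn : Z (M+1) ω = ∑ i ∈ Finset.range m, ξ M i ω := by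
            rw [hZsucc M ω, hZM]
          rw [hZn]
          exact congrArg (fun z => s' ^ (T (M+1) ω) * z)
            (Finset.prod_pow_eq_pow_sum (Finset.range m) (fun i => ξ M i ω) y).symm
        · rw [Set.indicator_of_notMem hω, Set.indicator_of_notMem hω, zero_mul]
      have hterm' : ∀ m, (fun ω => ((A m).indicator (fun ω' => s' ^ (T (M+1) ω')) ω) * (φ y) ^ m)
          = (A m).indicator (fun ω => s' ^ (T (M+1) ω) * (φ y) ^ (Z M ω)) := by
        intro m
        funext ω
        by_cases hω : ω ∈ A m
        · rw [Set.indicator_of_mem hω, Set.indicator_of_mem hω]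
          have hZM : Z M ω = m := hω
          rw [hZM]
        · rw [Set.indicator_of_notMem hω, Set.indicator_of_notMem hω, zero_mul]
      calc ∫⁻ ω, s' ^ (T (M+1) ω) * y ^ (Z (M+1) ω) ∂P
          = ∫⁻ ω, ∑' m, (A m).indicator (fun ω' => s' ^ (T (M+1) ω') * y ^ (Z (M+1) ω')) ω ∂P :=
            lintegral_congr (hpart _)
        _ = ∑' m, ∫⁻ ω, (A m).indicator (fun ω' => s' ^ (T (M+1) ω') * y ^ (Z (M+1) ω')) ω ∂P :=
            lintegral_tsum fun m => ((hHmeas.indicator (hAmeas m))).aemeasurable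
        _ = ∑' m, (∫⁻ ω, (A m).indicator (fun ω' => s' ^ (T (M+1) ω')) ω ∂P) * (φ y) ^ m := by
            refine tsum_congr fun m => ?_
            rw [show (fun ω => (A m).indicator (fun ω' => s' ^ (T (M+1) ω') * y ^ (Z (M+1) ω')) ω)
                = (A m).indicator (fun ω' => s' ^ (T (M+1) ω') * y ^ (Z (M+1) ω')) from rfl,
              hterm m]
            rw [aux_indep hξmeas hξindep hdisj (hfmS m) (hWmS m)]
            rw [aux_prod μ hξmeas hξdist hξindep y M m]
        _ = ∑' m, ∫⁻ ω, (A m).indicator (fun ω' => s' ^ (T (M+1) ω') * (φ y) ^ (Z M ω')) ω ∂P := by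
            refine tsum_congr fun m => ?_
            rw [← lintegral_mul_const ((φ y) ^ m)
              (((hfmS m)).mono (hmSle _) le_rfl)]
            rw [lintegral_congr (fun ω => congrFun (hterm' m) ω)]
        _ = ∫⁻ ω, s' ^ (T (M+1) ω) * (φ y) ^ (Z M ω) ∂P := by
            rw [← lintegral_tsum fun m => ((hHmeas'.indicator (hAmeas m))).aemeasurable]
            exact (lintegral_congr (hpart _)).symm
        _ ≤ s' * B := ih (φ y) (hφ1 y hy1) (le_trans (hφmono hyB) hfix)
  -- bound for all N
  have hbound : ∀ N, ∫⁻ ω, s' ^ (T N ω) ∂P ≤ s' * B := by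
    intro N
    cases N with
    | zero =>
      have : ∀ ω, s' ^ (T 0 ω) = 1 := fun ω => by simp [hT]
      rw [lintegral_congr this]
      simp only [lintegral_one, measure_univ, mul_one]
      exact one_le_mul hs'1 hB1
    | succ M =>
      have h := hKey M 1 le_rfl hB1
      calc ∫⁻ ω, s' ^ (T (M+1) ω) ∂P
          = ∫⁻ ω, s' ^ (T (M+1) ω) * (1:ℝ≥0∞) ^ (Z M ω) ∂P := by
            refine lintegral_congr fun ω => ?_
            rw [one_pow, mul_one]
      _ ≤ s' * B := h
  -- conclusion via monotone convergence
  have hconv : ∀ ω N, ENNReal.ofReal (s ^ (∑ n ∈ Finset.range N, Z n ω)) = s' ^ (T N ω) :=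
    fun ω N => ENNReal.ofReal_pow hs0 _
  have hmono : Monotone fun N => (fun ω => s' ^ (T N ω)) := by
    intro N N' h ω
    exact pow_le_pow_right' hs'1
      (Finset.sum_le_sum_of_subset (Finset.range_subset_range.mpr h))
  have hiSup : ∫⁻ ω, ⨆ N : ℕ, s' ^ (T N ω) ∂P = ⨆ N : ℕ, ∫⁻ ω, s' ^ (T N ω) ∂P :=
    lintegral_iSup (fun N => (measurable_from_top (f := fun k : ℕ => s' ^ k)).comp (hTm N)) hmono
  have hgoal : ∫⁻ ω, (⨆ N : ℕ, ENNReal.ofReal (s ^ (∑ n ∈ Finset.range N, Z n ω))) ∂P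
      = ∫⁻ ω, ⨆ N : ℕ, s' ^ (T N ω) ∂P := by
    refine lintegral_congr fun ω => ?_
    exact iSup_congr fun N => hconv ω N
  rw [hgoal, hiSup]
  exact lt_of_le_of_lt (iSup_le hbound)
    (ENNReal.mul_lt_top ENNReal.ofReal_lt_top ENNReal.ofReal_lt_top)
end

section
/- Let $\mu$ be a probability measure on $\mathbb{N}$ with mean $m \le 1$ and $\mu(1) < 1$. Then a Galton–Watson branching process with offspring distribution $\mu$ started from one individual dies out almost surely. -/
open MeasureTheory ProbabilityTheory ENNReal

lemma gw_pow_aux {s : ℝ≥0∞} (hs : s ≤ 1) : ∀ k : ℕ, (1:ℝ≥0∞) ≤ s ^ k + k * (1 - s) := by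
  intro k
  induction k with
  | zero => simp
  | succ k ih =>
    have h1 : s ^ k ≤ s ^ (k+1) + (1 - s) := by
      calc s ^ k = s ^ k * (s + (1 - s)) := by rw [add_tsub_cancel_of_le hs, mul_one]
      _ = s ^ (k+1) + s ^ k * (1 - s) := by ring
      _ ≤ s ^ (k+1) + 1 * (1 - s) := by gcongr; exact pow_le_one' hs k
      _ = s ^ (k+1) + (1 - s) := by rw [one_mul]
    calc (1:ℝ≥0∞) ≤ s ^ k + k * (1 - s) := ih
    _ ≤ (s ^ (k+1) + (1 - s)) + k * (1 - s) := by gcongr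
    _ = s ^ (k+1) + ((k:ℕ)+1 : ℕ) * (1 - s) := by push_cast; ring

lemma gw_phi_gt {μ : ℕ → ℝ≥0∞} (hμ : ∑' k, μ k = 1)
    (hmean : ∑' k : ℕ, (k : ℝ≥0∞) * μ k ≤ 1) (hμ1 : μ 1 < 1)
    {s : ℝ≥0∞} (hs : s < 1) : s < ∑' k, μ k * s ^ k := by
  by_contra hcon
  push_neg at hcon
  have hs1 : s ≤ 1 := hs.le
  have hsne : s ≠ ∞ := (hs.trans ENNReal.one_lt_top).ne
  have hμk_le : ∀ k, μ k ≤ 1 := fun k => hμ ▸ ENNReal.le_tsum k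
  set B := ∑' k, μ (k+1) with hB
  set A := ∑' k, μ (k+1) * s ^ (k+1) with hA
  set D := ∑' k : ℕ, (k : ℝ≥0∞) * μ (k+1) with hD
  have hsplit : ∀ f : ℕ → ℝ≥0∞, ∑' k, f k = f 0 + ∑' k, f (k+1) :=
    fun f => tsum_eq_zero_add' ENNReal.summable
  have hμsplit : μ 0 + B = 1 := by rw [hB, ← hsplit]; exact hμ
  have hBle : B ≤ 1 := by rw [← hμsplit]; exact le_add_self
  have hBne : B ≠ ∞ := (hBle.trans_lt ENNReal.one_lt_top).ne
  have hφ : ∑' k, μ k * s ^ k = μ 0 + A := by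
    rw [hsplit (fun k => μ k * s ^ k)]; simp [hA]
  have hmean' : B + D ≤ 1 := by
    have h1 : ∑' k : ℕ, (k : ℝ≥0∞) * μ k = B + D := by
      rw [hsplit (fun k : ℕ => (k : ℝ≥0∞) * μ k)]
      simp only [Nat.cast_zero, zero_mul, zero_add]
      rw [hB, hD, ← ENNReal.tsum_add]
      apply tsum_congr; intro k; push_cast; ring
    rw [← h1]; exact hmean
  have hDμ0 : D ≤ μ 0 := by
    have : B + D ≤ B + μ 0 := by
      rw [add_comm B (μ 0), hμsplit] at *
      exact hmean'.trans hμsplit.symm.le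
    exact (ENNReal.add_le_add_iff_left hBne).mp this
  have hterm : ∀ k : ℕ, μ (k+1) * s ≤ μ (k+1) * s ^ (k+1) + ((k:ℝ≥0∞) * μ (k+1)) * (s * (1 - s)) := by
    intro k
    have h := gw_pow_aux hs1 k
    calc μ (k+1) * s = μ (k+1) * s * 1 := (mul_one _).symm
    _ ≤ μ (k+1) * s * (s ^ k + k * (1 - s)) := by gcongr
    _ = μ (k+1) * s ^ (k+1) + ((k:ℝ≥0∞) * μ (k+1)) * (s * (1 - s)) := by ring
  have hBs : B * s ≤ A + D * (s * (1 - s)) := by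
    calc B * s = ∑' k, μ (k+1) * s := ENNReal.tsum_mul_right.symm
    _ ≤ ∑' k, (μ (k+1) * s ^ (k+1) + ((k:ℝ≥0∞) * μ (k+1)) * (s * (1 - s))) :=
        ENNReal.tsum_le_tsum hterm
    _ = A + D * (s * (1 - s)) := by rw [ENNReal.tsum_add, ENNReal.tsum_mul_right, hA, hD]
  have hAne : A ≠ ∞ := by
    have : A ≤ 1 := le_add_self.trans (hφ ▸ hcon.trans hs1)
    exact (this.trans_lt ENNReal.one_lt_top).ne
  have hkey : μ 0 ≤ μ 0 * s + D * (s * (1 - s)) := by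
    have h2 : μ 0 + A ≤ (μ 0 * s + D * (s * (1 - s))) + A := by
      calc μ 0 + A = ∑' k, μ k * s ^ k := hφ.symm
      _ ≤ s := hcon
      _ = (μ 0 + B) * s := by rw [hμsplit, one_mul]
      _ = μ 0 * s + B * s := by ring
      _ ≤ μ 0 * s + (A + D * (s * (1 - s))) := by gcongr
      _ = (μ 0 * s + D * (s * (1 - s))) + A := by ring
    exact (ENNReal.add_le_add_iff_right hAne).mp h2
  have hμ0 : μ 0 = 0 := by
    by_contra h0
    have hμ0ne : μ 0 ≠ ∞ := ((hμk_le 0).trans_lt ENNReal.one_lt_top).ne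
    have h1sne : (1:ℝ≥0∞) - s ≠ 0 := by
      rw [Ne, tsub_eq_zero_iff_le]; exact hs.not_ge
    have hc : s + s * (1 - s) < 1 := by
      have hlt : s * (1 - s) < 1 * (1 - s) :=
        ENNReal.mul_lt_mul_left h1sne (by simp [hsne]) hs
      calc s + s * (1 - s) < s + 1 * (1 - s) := ENNReal.add_lt_add_left hsne hlt
      _ = 1 := by rw [one_mul, add_tsub_cancel_of_le hs1]
    have h3 : μ 0 ≤ μ 0 * (s + s * (1 - s)) := by
      calc μ 0 ≤ μ 0 * s + D * (s * (1 - s)) := hkey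
      _ ≤ μ 0 * s + μ 0 * (s * (1 - s)) := by gcongr
      _ = μ 0 * (s + s * (1 - s)) := by ring
    have h4 : μ 0 * (s + s * (1 - s)) < μ 0 * 1 :=
      ENNReal.mul_lt_mul_right h0 hμ0ne hc
    rw [mul_one] at h4
    exact absurd (h3.trans_lt h4) (lt_irrefl _)
  have hD0 : D = 0 := le_antisymm (hμ0 ▸ hDμ0) zero_le
  have hμ2 : ∀ k : ℕ, μ (k + 2) = 0 := by
    intro k
    have := ENNReal.tsum_eq_zero.mp hD0 (k + 1)
    have hkne : ((k:ℝ≥0∞) + 1) ≠ 0 := ne_of_gt (lt_of_lt_of_le zero_lt_one le_add_self)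
    simpa [Nat.cast_add, Nat.cast_one, mul_eq_zero, hkne] using this
  have : μ 1 = 1 := by
    have h5 : ∑' k, μ (k + 2) = 0 := by simp [hμ2]
    have := hμ
    rw [hsplit μ, hsplit (fun k => μ (k+1)), h5, hμ0] at this
    simpa using this
  exact absurd this hμ1.ne

/-- A Galton–Watson branching process whose offspring distribution `μ` has mean `≤ 1`
and satisfies `μ(1) < 1` dies out almost surely. -/
theorem gw_extinction_critical_subcritical
    {Ω : Type*} [MeasurableSpace Ω] (P : Measure Ω) [IsProbabilityMeasure P]
    (μ : ℕ → ℝ≥0∞) (hμ : ∑' k, μ k = 1)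
    (hmean : ∑' k : ℕ, (k : ℝ≥0∞) * μ k ≤ 1) (hμ1 : μ 1 < 1)
    (ξ : ℕ → ℕ → Ω → ℕ) (hξmeas : ∀ n i, Measurable (ξ n i))
    (hξdist : ∀ n i k, P {ω | ξ n i ω = k} = μ k)
    (hξindep : iIndepFun
      (fun p : ℕ × ℕ => ξ p.1 p.2) P)
    (Z : ℕ → Ω → ℕ)
    (hZ0 : ∀ ω, Z 0 ω = 1)
    (hZsucc : ∀ n ω, Z (n + 1) ω = ∑ i ∈ Finset.range (Z n ω), ξ n i ω) :
    P {ω | ∃ n, Z n ω = 0} = 1 := by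
  classical
  set F : ℕ × ℕ → MeasurableSpace Ω :=
    fun p => MeasurableSpace.comap (fun ω => ξ p.1 p.2 ω) inferInstance with hF
  have hFle : ∀ p : ℕ × ℕ, F p ≤ ‹MeasurableSpace Ω› := fun p => (hξmeas p.1 p.2).comap_le
  have hindep : iIndep F P := hξindep
  have hmono : ∀ {m m' : MeasurableSpace Ω}, m ≤ m' → ∀ {s : Set Ω},
      MeasurableSet[m] s → MeasurableSet[m'] s := fun h _ hs => h _ hs
  have hξF : ∀ (n i : ℕ) (N : MeasurableSpace Ω), F (n, i) ≤ N → Measurable[N] (ξ n i) :=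
    fun n i N hle => measurable_iff_comap_le.mpr hle
  have hSmeas : ∀ (n k : ℕ) (N : MeasurableSpace Ω), (∀ i, i < k → F (n, i) ≤ N) →
      Measurable[N] (fun ω => ∑ i ∈ Finset.range k, ξ n i ω) := by
    intro n k N h
    exact Finset.measurable_sum _ (fun i hi => hξF n i N (h i (Finset.mem_range.mp hi)))
  set past : ℕ → MeasurableSpace Ω := fun n => ⨆ p ∈ {q : ℕ × ℕ | q.1 < n}, F p with hpast
  have hpast_le : ∀ n, past n ≤ ‹MeasurableSpace Ω› := fun n => iSup₂_le fun p _ => hFle p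
  have hFpast : ∀ (p : ℕ × ℕ) (n : ℕ), p.1 < n → F p ≤ past n := fun p n hp =>
    le_iSup₂ (f := fun (q : ℕ × ℕ) (_ : q ∈ {q : ℕ × ℕ | q.1 < n}) => F q) p hp
  have hpast_mono : Monotone past := fun a b hab =>
    iSup₂_le fun p hp => hFpast p b (lt_of_lt_of_le hp hab)
  have hZmeas : ∀ n, Measurable[past n] (Z n) := by
    intro n
    induction n with
    | zero =>
      have h : Z 0 = fun _ => 1 := funext hZ0
      rw [h]; exact measurable_const
    | succ n ih =>
      have h : Z (n+1) = fun ω => ∑ i ∈ Finset.range (Z n ω), ξ n i ω := funext (hZsucc n)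
      rw [h]
      refine @measurable_to_countable' ℕ Ω _ _ (past (n+1)) _ (fun j => ?_)
      have hU : (fun ω => ∑ i ∈ Finset.range (Z n ω), ξ n i ω) ⁻¹' {j}
          = ⋃ k, ({ω | Z n ω = k} ∩ {ω | ∑ i ∈ Finset.range k, ξ n i ω = j}) := by
        ext ω
        simp only [Set.mem_preimage, Set.mem_singleton_iff, Set.mem_iUnion, Set.mem_inter_iff,
          Set.mem_setOf_eq]
        constructor
        · intro hω; exact ⟨Z n ω, rfl, hω⟩
        · rintro ⟨k, hk, hω⟩; rw [hk]; exact hω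
      rw [hU]
      refine MeasurableSet.iUnion fun k => MeasurableSet.inter ?_ ?_
      · exact hmono (hpast_mono (Nat.le_succ n)) (ih (measurableSet_singleton k))
      · exact hSmeas n k (past (n+1))
          (fun i _ => hFpast (n, i) (n+1) (Nat.lt_succ_self n)) (measurableSet_singleton j)
  have hZm : ∀ n, Measurable (Z n) := fun n => (hZmeas n).mono (hpast_le n) le_rfl
  have hSm : ∀ n k, Measurable (fun ω => ∑ i ∈ Finset.range k, ξ n i ω) :=
    fun n k => Finset.measurable_sum _ fun i _ => hξmeas n i
  set p : ℕ → ℕ → ℝ≥0∞ := fun n k => P {ω | Z n ω = k} with hpdef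
  set e : ℕ → ℕ → ℕ → ℝ≥0∞ := fun n k j => P {ω | ∑ i ∈ Finset.range k, ξ n i ω = j} with hedef
  set φ : ℝ≥0∞ → ℝ≥0∞ := fun s => ∑' m, μ m * s ^ m with hφdef
  have hI1 : ∀ n k j, P ({ω | Z n ω = k} ∩ {ω | ∑ i ∈ Finset.range k, ξ n i ω = j})
      = p n k * e n k j := by
    intro n k j
    have hd : Disjoint {q : ℕ × ℕ | q.1 < n} {q : ℕ × ℕ | q.1 = n} := by
      rw [Set.disjoint_left]; rintro ⟨a, b⟩ ha hb
      simp only [Set.mem_setOf_eq] at ha hb; omega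
    have hind := indep_iSup_of_disjoint hFle hindep hd
    refine (Indep_iff _ _ _).mp hind _ _ ?_ ?_
    · exact hZmeas n (measurableSet_singleton k)
    · refine hSmeas n k _ (fun i _ =>
        le_iSup₂ (f := fun (q : ℕ × ℕ) (_ : q ∈ {q : ℕ × ℕ | q.1 = n}) => F q) (n, i) rfl)
        (measurableSet_singleton j)
  have hI2 : ∀ n k j1 j2, P ({ω | ∑ i ∈ Finset.range k, ξ n i ω = j1} ∩ {ω | ξ n k ω = j2})
      = e n k j1 * μ j2 := by
    intro n k j1 j2
    have hd : Disjoint {q : ℕ × ℕ | q.1 = n ∧ q.2 < k} {q : ℕ × ℕ | q = (n, k)} := by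
      rw [Set.disjoint_left]; rintro ⟨a, b⟩ ha hb
      simp only [Set.mem_setOf_eq, Prod.mk.injEq] at ha hb; omega
    have hind := indep_iSup_of_disjoint hFle hindep hd
    rw [← hξdist n k j2]
    exact (Indep_iff _ _ _).mp hind _ _
      (hSmeas n k _ (fun i hi =>
        le_iSup₂ (f := fun (q : ℕ × ℕ) (_ : q ∈ {q : ℕ × ℕ | q.1 = n ∧ q.2 < k}) => F q)
          (n, i) ⟨rfl, hi⟩) (measurableSet_singleton j1))
      (hξF n k _
        (le_iSup₂ (f := fun (q : ℕ × ℕ) (_ : q ∈ {q : ℕ × ℕ | q = (n, k)}) => F q) (n, k) rfl)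
        (measurableSet_singleton j2))
  have hrec : ∀ n j, p (n+1) j = ∑' k, p n k * e n k j := by
    intro n j
    have hU : {ω | Z (n+1) ω = j}
        = ⋃ k, ({ω | Z n ω = k} ∩ {ω | ∑ i ∈ Finset.range k, ξ n i ω = j}) := by
      ext ω
      simp only [Set.mem_setOf_eq, Set.mem_iUnion, Set.mem_inter_iff, hZsucc n ω]
      constructor
      · intro hω; exact ⟨Z n ω, rfl, hω⟩
      · rintro ⟨k, hk, hω⟩; rw [hk]; exact hω
    have hdisj : Pairwise (Function.onFun Disjoint fun k =>
        ({ω | Z n ω = k} ∩ {ω | ∑ i ∈ Finset.range k, ξ n i ω = j})) := by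
      intro a b hab
      refine Set.disjoint_left.mpr ?_
      rintro ω ⟨ha, _⟩ ⟨hb, _⟩
      exact hab (ha.symm.trans hb)
    have hms : ∀ k, MeasurableSet ({ω | Z n ω = k} ∩ {ω | ∑ i ∈ Finset.range k, ξ n i ω = j}) :=
      fun k => (hZm n (measurableSet_singleton k)).inter (hSm n k (measurableSet_singleton j))
    show P {ω | Z (n+1) ω = j} = _
    rw [hU, measure_iUnion hdisj hms]
    exact tsum_congr fun k => hI1 n k j
  have hconv : ∀ n k j, e n (k+1) j = ∑' j1, e n k j1 * (if j1 ≤ j then μ (j - j1) else 0) := by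
    intro n k j
    have hU : {ω | ∑ i ∈ Finset.range (k+1), ξ n i ω = j}
        = ⋃ j1, ({ω | ∑ i ∈ Finset.range k, ξ n i ω = j1} ∩ {ω | j1 + ξ n k ω = j}) := by
      ext ω
      simp only [Set.mem_setOf_eq, Set.mem_iUnion, Set.mem_inter_iff, Finset.sum_range_succ]
      constructor
      · intro hω; exact ⟨∑ i ∈ Finset.range k, ξ n i ω, rfl, hω⟩
      · rintro ⟨j1, h1, h2⟩; rw [h1]; exact h2
    have hdisj : Pairwise (Function.onFun Disjoint fun j1 =>
        ({ω | ∑ i ∈ Finset.range k, ξ n i ω = j1} ∩ {ω | j1 + ξ n k ω = j})) := by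
      intro a b hab; refine Set.disjoint_left.mpr ?_
      rintro ω ⟨ha, _⟩ ⟨hb, _⟩; exact hab (ha.symm.trans hb)
    have hms : ∀ j1 : ℕ,
        MeasurableSet ({ω | ∑ i ∈ Finset.range k, ξ n i ω = j1} ∩ {ω | j1 + ξ n k ω = j}) := by
      intro j1
      refine (hSm n k (measurableSet_singleton j1)).inter ?_
      exact hξmeas n k (MeasurableSet.of_discrete (s := {x : ℕ | j1 + x = j}))
    have hPA : ∀ j1, P ({ω | ∑ i ∈ Finset.range k, ξ n i ω = j1} ∩ {ω | j1 + ξ n k ω = j})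
        = e n k j1 * (if j1 ≤ j then μ (j - j1) else 0) := by
      intro j1
      by_cases hle : j1 ≤ j
      · have hset : {ω | j1 + ξ n k ω = j} = {ω | ξ n k ω = j - j1} := by
          ext ω; simp only [Set.mem_setOf_eq]; omega
        rw [hset, hI2 n k j1 (j - j1), if_pos hle]
      · have hset : {ω | j1 + ξ n k ω = j} = ∅ := by
          ext ω; simp only [Set.mem_setOf_eq, Set.mem_empty_iff_false, iff_false]; omega
        rw [hset, Set.inter_empty, measure_empty, if_neg hle, mul_zero]
    show P {ω | ∑ i ∈ Finset.range (k+1), ξ n i ω = j} = _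
    rw [hU, measure_iUnion hdisj hms]
    exact tsum_congr hPA
  have hgen : ∀ n k (s : ℝ≥0∞), ∑' j, e n k j * s ^ j = (φ s) ^ k := by
    intro n k s
    induction k with
    | zero =>
      have h0 : ∀ j, e n 0 j * s ^ j = if j = 0 then 1 else 0 := by
        intro j
        by_cases hj : j = 0
        · subst hj
          have h1 : {ω | ∑ i ∈ Finset.range 0, ξ n i ω = 0} = Set.univ := by
            ext ω; simp
          show P _ * s ^ 0 = _
          rw [h1, measure_univ, pow_zero, mul_one, if_pos rfl]
        · have h1 : {ω | ∑ i ∈ Finset.range 0, ξ n i ω = j} = ∅ := by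
            ext ω; simp only [Finset.range_zero, Finset.sum_empty, Set.mem_setOf_eq,
              Set.mem_empty_iff_false, iff_false]
            omega
          show P _ * s ^ j = _
          rw [h1, measure_empty, zero_mul, if_neg hj]
      rw [tsum_congr h0, tsum_ite_eq, pow_zero]
    | succ k ih =>
      have key : ∀ j1 : ℕ, ∑' j, (if j1 ≤ j then μ (j - j1) else 0) * s ^ j
          = s ^ j1 * φ s := by
        intro j1
        have hinj : Function.Injective (fun d : ℕ => j1 + d) := fun a b h => Nat.add_left_cancel h
        have hsupp : Function.support (fun j => (if j1 ≤ j then μ (j - j1) else 0) * s ^ j)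
            ⊆ Set.range (fun d : ℕ => j1 + d) := by
          intro j hj
          by_cases hle : j1 ≤ j
          · exact ⟨j - j1, by show j1 + (j - j1) = j; omega⟩
          · exfalso; apply hj
            show (if j1 ≤ j then μ (j - j1) else 0) * s ^ j = 0
            rw [if_neg hle, zero_mul]
        rw [← Function.Injective.tsum_eq hinj hsupp]
        have h2 : ∀ d : ℕ, (if j1 ≤ j1 + d then μ (j1 + d - j1) else 0) * s ^ (j1 + d)
            = s ^ j1 * (μ d * s ^ d) := by
          intro d
          rw [if_pos (Nat.le_add_right _ _)]
          have h3 : j1 + d - j1 = d := by omega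
          rw [h3, pow_add]; ring
        rw [tsum_congr h2, ENNReal.tsum_mul_left]
      calc ∑' j, e n (k+1) j * s ^ j
          = ∑' j, ∑' j1, e n k j1 * ((if j1 ≤ j then μ (j - j1) else 0) * s ^ j) := by
            refine tsum_congr fun j => ?_
            rw [hconv n k j, ← ENNReal.tsum_mul_right]
            exact tsum_congr fun j1 => mul_assoc _ _ _
      _ = ∑' j1, ∑' j, e n k j1 * ((if j1 ≤ j then μ (j - j1) else 0) * s ^ j) :=
            ENNReal.tsum_comm
      _ = ∑' j1, e n k j1 * (s ^ j1 * φ s) := by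
            refine tsum_congr fun j1 => ?_
            rw [ENNReal.tsum_mul_left, key j1]
      _ = (∑' j1, e n k j1 * s ^ j1) * φ s := by
            rw [← ENNReal.tsum_mul_right]
            exact tsum_congr fun j1 => by ring
      _ = (φ s) ^ (k+1) := by rw [ih, pow_succ]
  have hgrec : ∀ n (s : ℝ≥0∞), ∑' k, p (n+1) k * s ^ k = ∑' k, p n k * (φ s) ^ k := by
    intro n s
    calc ∑' j, p (n+1) j * s ^ j
        = ∑' j, ∑' k, p n k * (e n k j * s ^ j) := by
          refine tsum_congr fun j => ?_
          rw [hrec n j, ← ENNReal.tsum_mul_right]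
          exact tsum_congr fun k => mul_assoc _ _ _
    _ = ∑' k, ∑' j, p n k * (e n k j * s ^ j) := ENNReal.tsum_comm
    _ = ∑' k, p n k * (φ s) ^ k := by
          refine tsum_congr fun k => ?_
          rw [ENNReal.tsum_mul_left, hgen n k s]
  have hp0 : ∀ s : ℝ≥0∞, ∑' k, p 0 k * s ^ k = s := by
    intro s
    have h : ∀ k, p 0 k * s ^ k = if k = 1 then s else 0 := by
      intro k
      by_cases hk : k = 1
      · subst hk
        have h1 : {ω | Z 0 ω = 1} = Set.univ := by
          ext ω; simp [hZ0]
        show P _ * s ^ 1 = _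
        rw [h1, measure_univ, one_mul, pow_one, if_pos rfl]
      · have h1 : {ω | Z 0 ω = k} = ∅ := by
          ext ω
          simp only [Set.mem_setOf_eq, hZ0 ω, Set.mem_empty_iff_false, iff_false]
          omega
        show P _ * s ^ k = _
        rw [h1, measure_empty, zero_mul, if_neg hk]
    rw [tsum_congr h, tsum_ite_eq]
  have hgn : ∀ n (s : ℝ≥0∞), ∑' k, p n k * s ^ k = φ^[n] s := by
    intro n
    induction n with
    | zero => intro s; simpa using hp0 s
    | succ n ih =>
      intro s
      rw [hgrec n s, ih (φ s), Function.iterate_succ_apply]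
  have hq : ∀ n, p n 0 = φ^[n] 0 := by
    intro n
    rw [← hgn n 0, tsum_eq_single 0 (fun k hk => by rw [zero_pow hk, mul_zero])]
    simp
  have hφmono : Monotone φ := fun a b hab =>
    ENNReal.tsum_le_tsum fun m => mul_le_mul_right (pow_le_pow_left' hab m) _
  have hrsucc : ∀ n, φ^[n] (0:ℝ≥0∞) ≤ φ^[n+1] 0 := by
    intro n
    induction n with
    | zero => exact zero_le
    | succ n ih =>
      rw [Function.iterate_succ_apply', Function.iterate_succ_apply']
      exact hφmono ih
  have hrmono : Monotone fun n => φ^[n] (0:ℝ≥0∞) := monotone_nat_of_le_succ hrsucc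
  have hφ1 : φ 1 = 1 := by
    rw [hφdef]; simpa using hμ
  have hrle1 : ∀ n, φ^[n] (0:ℝ≥0∞) ≤ 1 := by
    intro n
    induction n with
    | zero => exact zero_le
    | succ n ih =>
      rw [Function.iterate_succ_apply']
      calc φ (φ^[n] 0) ≤ φ 1 := hφmono ih
      _ = 1 := hφ1
  set q : ℝ≥0∞ := ⨆ n, φ^[n] 0 with hqdef
  have hqle : q ≤ 1 := iSup_le hrle1
  have hswap : ∀ (f : ℕ → ℕ → ℝ≥0∞), Monotone f →
      ∑' m, ⨆ n, f n m = ⨆ n, ∑' m, f n m := by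
    intro f hf
    have h1 : ∀ g : ℕ → ℝ≥0∞, ∑' m, g m = ∫⁻ m, g m ∂(Measure.count) :=
      fun g => (MeasureTheory.lintegral_count g).symm
    rw [h1]
    simp_rw [h1]
    rw [← MeasureTheory.lintegral_iSup (fun n => measurable_from_top) hf]
  have hfix : φ q = q := by
    have hpowsup : ∀ m : ℕ, q ^ m = ⨆ n, (φ^[n] (0:ℝ≥0∞)) ^ m := by
      intro m
      have hm : Monotone fun x : ℝ≥0∞ => x ^ m := fun a b hab => pow_le_pow_left' hab m
      have ht : Filter.Tendsto (fun n => φ^[n] (0:ℝ≥0∞)) Filter.atTop (nhds q) :=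
        tendsto_atTop_iSup hrmono
      have ht2 : Filter.Tendsto (fun n => (φ^[n] (0:ℝ≥0∞)) ^ m) Filter.atTop (nhds (q ^ m)) :=
        ((ENNReal.continuous_pow m).continuousAt.tendsto.comp ht)
      exact (iSup_eq_of_tendsto (hm.comp hrmono) ht2).symm
    have hfmono : Monotone (fun n m => μ m * (φ^[n] (0:ℝ≥0∞)) ^ m) := by
      intro a b hab
      intro m
      exact mul_le_mul_right (pow_le_pow_left' (hrmono hab) m) _
    calc φ q = ∑' m, μ m * ⨆ n, (φ^[n] (0:ℝ≥0∞)) ^ m :=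
          tsum_congr fun m => by rw [hpowsup m]
    _ = ∑' m, ⨆ n, μ m * (φ^[n] (0:ℝ≥0∞)) ^ m := tsum_congr fun m => by
          rw [ENNReal.mul_iSup]
    _ = ⨆ n, ∑' m, μ m * (φ^[n] (0:ℝ≥0∞)) ^ m := hswap _ hfmono
    _ = ⨆ n, φ^[n+1] (0:ℝ≥0∞) := by
          refine iSup_congr fun n => ?_
          rw [Function.iterate_succ_apply']
    _ = q := le_antisymm (iSup_le fun n => le_iSup (fun n => φ^[n] (0:ℝ≥0∞)) (n+1))
          (iSup_le fun n => (hrsucc n).trans (le_iSup (fun n => φ^[n+1] (0:ℝ≥0∞)) n))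
  have hzero : ∀ (a b : ℕ), a ≤ b → ∀ ω, Z a ω = 0 → Z b ω = 0 := by
    intro a b hab
    induction b, hab using Nat.le_induction with
    | base => exact fun ω h => h
    | succ b hb ih => intro ω h; rw [hZsucc, ih ω h]; simp
  have hset : {ω | ∃ n, Z n ω = 0} = ⋃ n, {ω | Z n ω = 0} := by
    ext ω; simp [Set.mem_iUnion]
  have hdir : Directed (· ⊆ ·) fun n => {ω | Z n ω = 0} := by
    apply Monotone.directed_le
    intro a b hab ω hω
    exact hzero a b hab ω hω
  rw [hset, Directed.measure_iUnion hdir]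
  have hPn : ∀ n, P {ω | Z n ω = 0} = φ^[n] 0 := fun n => hq n
  calc ⨆ n, P {ω | Z n ω = 0} = ⨆ n, φ^[n] (0:ℝ≥0∞) := iSup_congr hPn
  _ = 1 := by
    by_contra hne
    have hql : q < 1 := lt_of_le_of_ne hqle hne
    have h := gw_phi_gt hμ hmean hμ1 hql
    have h2 : (∑' k, μ k * q ^ k) = φ q := rfl
    rw [h2, hfix] at h
    exact absurd h (lt_irrefl q)
end

section
/- Let $G$ be a graph of maximum degree $\Delta$, $S$ a finite vertex set, $x \in S$ with $D := d_G(x, S^c) \ge 1$. For a rate-1 continuous-time simple random walk from $x$, with $N(t)$ the number of jumps by time $t$ and $\tau_{S^c}$ the exit time of $S$, we have $\mathbb{E}_x[N(t) \mid \tau_{S^c} \le t] \le \Delta^{D}(t + D)$. -/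
open MeasureTheory ENNReal
open scoped Classical

section WalksAux

variable {V : Type*} (G : SimpleGraph V) [DecidableEq V] [∀ v : V, Fintype (G.neighborSet v)]
  (x : V)

/-- Finset of (normalized) walk-functions of length `n` starting at `x`. -/
noncomputable def walksF : ℕ → Finset (ℕ → V)
  | 0 => {fun _ => x}
  | n + 1 => (walksF n).biUnion fun v =>
      (G.neighborFinset (v n)).image fun u => fun i => if i ≤ n then v i else u

lemma walksF_tail {n : ℕ} {v : ℕ → V} (hv : v ∈ walksF G x n) {i : ℕ} (hi : n ≤ i) :
    v i = v n := by
  induction n generalizing v i with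
  | zero =>
    simp only [walksF, Finset.mem_singleton] at hv
    subst hv; rfl
  | succ n ih =>
    rw [walksF, Finset.mem_biUnion] at hv
    obtain ⟨w, hw, hv⟩ := hv
    rw [Finset.mem_image] at hv
    obtain ⟨u, hu, rfl⟩ := hv
    have h1 : ¬ i ≤ n := by omega
    have h2 : ¬ n + 1 ≤ n := by omega
    simp [h1, h2]

lemma walksF_eq_of_agree {n : ℕ} {v w : ℕ → V} (hv : v ∈ walksF G x n)
    (hw : w ∈ walksF G x n) (h : ∀ i ≤ n, v i = w i) : v = w := by
  funext i
  by_cases hi : i ≤ n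
  · exact h i hi
  · rw [walksF_tail G x hv (le_of_not_ge hi), walksF_tail G x hw (le_of_not_ge hi), h n le_rfl]

lemma walksF_dist (hconn : G.Connected) {n : ℕ} {v : ℕ → V} (hv : v ∈ walksF G x n) :
    G.dist x (v n) ≤ n := by
  induction n generalizing v with
  | zero =>
    simp only [walksF, Finset.mem_singleton] at hv
    subst hv; simp
  | succ n ih =>
    rw [walksF, Finset.mem_biUnion] at hv
    obtain ⟨w, hw, hv⟩ := hv
    rw [Finset.mem_image] at hv
    obtain ⟨u, hu, rfl⟩ := hv
    have hadj : G.Adj (w n) u := by rwa [SimpleGraph.mem_neighborFinset] at hu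
    have h2 : ¬ n + 1 ≤ n := by omega
    simp only [h2, if_false]
    calc G.dist x u ≤ G.dist x (w n) + G.dist (w n) u := hconn.dist_triangle
      _ = G.dist x (w n) + 1 := by rw [SimpleGraph.dist_eq_one_iff_adj.mpr hadj]
      _ ≤ n + 1 := by have := ih hw; omega

end WalksAux

set_option maxHeartbeats 1000000

/-- For a continuous-time simple random walk (discrete jump chain `X` with a
Poisson(t) number `N` of jumps by time `t`, independent of the chain) started at
`x ∈ S` on a graph of maximum degree `Δ`, with `D = d_G(x, Sᶜ)`, the probability of
conditional expectation of the number of jumps given exit of `S` by time `t`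
satisfies `E[N(t) · 1_{τ ≤ t}] ≤ Δ^D (t + D) · P(τ ≤ t)`, i.e.
`E[N(t) | τ_{Sᶜ} ≤ t] ≤ Δ^D (t + D)`. -/
theorem ctrw_conditional_jump_bound
    {V : Type*} (G : SimpleGraph V) [DecidableEq V] [inst : ∀ v : V, Fintype (G.neighborSet v)]
    (hconn : G.Connected) (Δ : ℕ) (hdeg : ∀ v, G.degree v ≤ Δ)
    {Ω : Type*} [MeasurableSpace Ω] (P : Measure Ω) [IsProbabilityMeasure P]
    (X : ℕ → Ω → V) (hXmeas : ∀ i, @Measurable Ω V _ ⊤ (X i))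
    (N : Ω → ℕ) (hNmeas : Measurable N)
    (t : ℝ) (ht : 0 < t)
    (S : Set V) (hSfin : S.Finite) (x : V) (hxS : x ∈ S)
    (D : ℕ) (hD : 1 ≤ D)
    (y₀ : V) (hy₀ : y₀ ∉ S) (hy₀dist : G.dist x y₀ = D)
    (hDmin : ∀ y, y ∉ S → D ≤ G.dist x y)
    (hX0 : P {ω | X 0 ω = x} = 1)
    (hmarkov : ∀ (n : ℕ) (v : ℕ → V),
      P {ω | ∀ i ≤ n + 1, X i ω = v i} =
        P {ω | ∀ i ≤ n, X i ω = v i} *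
          (if G.Adj (v n) (v (n + 1)) then ((G.degree (v n) : ℝ≥0∞))⁻¹ else 0))
    (hN : ∀ k, P {ω | N ω = k} = ENNReal.ofReal (t ^ k * Real.exp (-t) / (Nat.factorial k : ℝ)))
    (hindep : ∀ (k n : ℕ) (v : ℕ → V),
      P ({ω | N ω = k} ∩ {ω | ∀ i ≤ n, X i ω = v i}) =
        P {ω | N ω = k} * P {ω | ∀ i ≤ n, X i ω = v i}) :
    ∫⁻ ω in {ω | ∃ n ≤ N ω, X n ω ∉ S}, (N ω : ℝ≥0∞) ∂P ≤
      ENNReal.ofReal ((Δ : ℝ) ^ D * (t + D)) * P {ω | ∃ n ≤ N ω, X n ω ∉ S} := by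
  -- notation
  set A : Set Ω := {ω | ∃ n ≤ N ω, X n ω ∉ S} with hA
  -- basic degree facts
  have hxy : x ≠ y₀ := by
    intro h; rw [h, SimpleGraph.dist_self] at hy₀dist; omega
  have hdegpos : ∀ v : V, 0 < G.degree v := by
    intro v
    rw [SimpleGraph.degree_pos_iff_exists_adj]
    rcases eq_or_ne v x with rfl | hvx
    · obtain ⟨p⟩ := hconn v y₀
      cases p with
      | nil => exact absurd rfl hxy
      | cons h _ => exact ⟨_, h⟩
    · obtain ⟨p⟩ := hconn v x
      cases p with
      | nil => exact absurd rfl hvx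
      | cons h _ => exact ⟨_, h⟩
  have hΔ1 : 1 ≤ Δ := le_trans (hdegpos x) (hdeg x)
  have hΔ0 : ((Δ : ℝ≥0∞)) ≠ 0 := by
    simp only [ne_eq, Nat.cast_eq_zero]; omega
  -- measurability of cylinders
  have hCylMeas : ∀ (n : ℕ) (v : ℕ → V), MeasurableSet {ω | ∀ i ≤ n, X i ω = v i} := by
    intro n v
    have : {ω | ∀ i ≤ n, X i ω = v i} = ⋂ i, ⋂ (_ : i ≤ n), X i ⁻¹' {v i} := by
      ext ω; simp [Set.mem_iInter]
    rw [this]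
    exact MeasurableSet.iInter fun i => MeasurableSet.iInter fun _ =>
      hXmeas i MeasurableSpace.measurableSet_top
  have hNkMeas : ∀ k : ℕ, MeasurableSet {ω | N ω = k} := fun k =>
    hNmeas (measurableSet_singleton k)
  -- the total mass of walk cylinders is 1
  have hwdisj : ∀ n : ℕ, (↑(walksF G x n) : Set (ℕ → V)).PairwiseDisjoint
      (fun v => {ω | ∀ i ≤ n, X i ω = v i}) := by
    intro n v hv w hw hne
    refine Set.disjoint_left.mpr fun ω h1 h2 => hne ?_
    refine walksF_eq_of_agree G x (by exact_mod_cast hv) (by exact_mod_cast hw) fun i hi => ?_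
    rw [← h1 i hi, ← h2 i hi]
  have hcylsum : ∀ n : ℕ, ∑ v ∈ walksF G x n, P {ω | ∀ i ≤ n, X i ω = v i} = 1 := by
    intro n
    induction n with
    | zero =>
      rw [walksF, Finset.sum_singleton]
      have : {ω | ∀ i ≤ 0, X i ω = (fun _ => x) i} = {ω | X 0 ω = x} := by
        ext ω; simp [Nat.le_zero]
      rw [this, hX0]
    | succ n ih =>
      rw [walksF]
      rw [Finset.sum_biUnion]
      · have hterm : ∀ v ∈ walksF G x n,
            (∑ f ∈ (G.neighborFinset (v n)).image (fun u => fun i => if i ≤ n then v i else u),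
              P {ω | ∀ i ≤ n + 1, X i ω = f i}) = P {ω | ∀ i ≤ n, X i ω = v i} := by
          intro v hv
          rw [Finset.sum_image]
          · have hval : ∀ u ∈ G.neighborFinset (v n),
                P {ω | ∀ i ≤ n + 1, X i ω = (fun i => if i ≤ n then v i else u) i} =
                  P {ω | ∀ i ≤ n, X i ω = v i} * ((G.degree (v n) : ℝ≥0∞))⁻¹ := by
              intro u hu
              have hadj : G.Adj (v n) u := by rwa [SimpleGraph.mem_neighborFinset] at hu
              rw [hmarkov n (fun i => if i ≤ n then v i else u)]
              have e1 : {ω | ∀ i ≤ n, X i ω = (fun i => if i ≤ n then v i else u) i} =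
                  {ω | ∀ i ≤ n, X i ω = v i} := by
                ext ω
                simp only [Set.mem_setOf_eq]
                exact forall₂_congr fun i hi => by rw [if_pos hi]
              rw [e1]
              have hn : ¬ n + 1 ≤ n := by omega
              rw [if_pos (le_refl n), if_neg hn, if_pos hadj]
            rw [Finset.sum_congr rfl hval, Finset.sum_const,
              SimpleGraph.card_neighborFinset_eq_degree, nsmul_eq_mul, ← mul_assoc,
              mul_comm ((G.degree (v n) : ℝ≥0∞)) _, mul_assoc,
              ENNReal.mul_inv_cancel (by exact_mod_cast (hdegpos (v n)).ne') (by simp), mul_one]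
          · intro u₁ _ u₂ _ h
            have hn : ¬ n + 1 ≤ n := by omega
            have h1 : (if n + 1 ≤ n then v (n + 1) else u₁) =
                (if n + 1 ≤ n then v (n + 1) else u₂) := congrFun h (n + 1)
            rwa [if_neg hn, if_neg hn] at h1
        rw [Finset.sum_congr rfl hterm, ih]
      · -- pairwise disjointness of the image finsets
        intro v hv w hw hne
        rw [Finset.mem_coe] at hv hw
        refine Finset.disjoint_left.mpr fun f hf hg => hne ?_
        rw [Finset.mem_image] at hf hg
        obtain ⟨u₁, _, rfl⟩ := hf
        obtain ⟨u₂, _, hg⟩ := hg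
        refine walksF_eq_of_agree G x hv hw fun i hi => ?_
        have h1 : (if i ≤ n then w i else u₂) = (if i ≤ n then v i else u₁) :=
          congrFun hg i
        rw [if_pos hi, if_pos hi] at h1
        exact h1.symm
  -- the walk is inside S up to time D-1, a.s.
  have hXnull : ∀ m, m < D → P {ω | X m ω ∉ S} = 0 := by
    intro m hm
    have hUmeas : MeasurableSet (⋃ v ∈ walksF G x m, {ω | ∀ i ≤ m, X i ω = v i}) :=
      (walksF G x m).measurableSet_biUnion fun v _ => hCylMeas m v
    have hUeq : P (⋃ v ∈ walksF G x m, {ω | ∀ i ≤ m, X i ω = v i}) = 1 := by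
      rw [measure_biUnion_finset (hwdisj m) fun v _ => hCylMeas m v]
      exact hcylsum m
    have hcompl : P (⋃ v ∈ walksF G x m, {ω | ∀ i ≤ m, X i ω = v i})ᶜ = 0 := by
      rw [measure_compl hUmeas (measure_ne_top P _), hUeq, measure_univ, tsub_self]
    have hsub : {ω | X m ω ∉ S} ⊆ (⋃ v ∈ walksF G x m, {ω | ∀ i ≤ m, X i ω = v i})ᶜ := by
      intro ω hω
      simp only [Set.mem_compl_iff, Set.mem_iUnion, not_exists]
      rintro v hv hcyl
      have h1 : X m ω = v m := hcyl m le_rfl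
      have h2 : G.dist x (v m) ≤ m := walksF_dist G x hconn hv
      have h3 : D ≤ G.dist x (X m ω) := hDmin _ hω
      rw [h1] at h3
      omega
    exact le_antisymm (le_trans (measure_mono hsub) hcompl.le) (zero_le)
  have hsmallnull : P (A ∩ {ω | N ω < D}) = 0 := by
    have hsub : A ∩ {ω | N ω < D} ⊆ ⋃ m, {ω | m < D ∧ X m ω ∉ S} := by
      rintro ω ⟨⟨n, hn, hout⟩, hlt⟩
      have hlt' : N ω < D := hlt
      exact Set.mem_iUnion.mpr ⟨n, by omega, hout⟩
    refine measure_mono_null hsub (measure_iUnion_null fun m => ?_)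
    by_cases hm : m < D
    · refine measure_mono_null (fun ω hω => hω.2) (hXnull m hm)
    · have : {ω | m < D ∧ X m ω ∉ S} = ∅ := by
        ext ω; simp [hm]
      simp [this]
  -- Step 1: bound the integral by the Poisson tail sum
  have key1 : ∫⁻ ω in A, (N ω : ℝ≥0∞) ∂P ≤
      ∑' j : ℕ, ((D + j : ℕ) : ℝ≥0∞) * P {ω | N ω = D + j} := by
    have hsub : A ⊆ (A ∩ {ω | N ω < D}) ∪ {ω | D ≤ N ω} := by
      intro ω hω
      by_cases h : N ω < D
      · exact Or.inl ⟨hω, h⟩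
      · exact Or.inr (not_lt.mp h)
    have hUnion : {ω | D ≤ N ω} = ⋃ j : ℕ, {ω | N ω = D + j} := by
      ext ω
      simp only [Set.mem_setOf_eq, Set.mem_iUnion]
      constructor
      · intro h; exact ⟨N ω - D, by omega⟩
      · rintro ⟨j, hj⟩; omega
    have hdisjN : Pairwise (Function.onFun Disjoint fun j : ℕ => {ω | N ω = D + j}) := by
      intro i j hij
      refine Set.disjoint_left.mpr fun ω h1 h2 => hij ?_
      simp only [Set.mem_setOf_eq] at h1 h2
      omega
    calc ∫⁻ ω in A, (N ω : ℝ≥0∞) ∂P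
        ≤ ∫⁻ ω in (A ∩ {ω | N ω < D}) ∪ {ω | D ≤ N ω}, (N ω : ℝ≥0∞) ∂P :=
          lintegral_mono_set hsub
      _ ≤ (∫⁻ ω in A ∩ {ω | N ω < D}, (N ω : ℝ≥0∞) ∂P) +
            ∫⁻ ω in {ω | D ≤ N ω}, (N ω : ℝ≥0∞) ∂P := lintegral_union_le _ _ _
      _ = ∫⁻ ω in {ω | D ≤ N ω}, (N ω : ℝ≥0∞) ∂P := by
          rw [setLIntegral_measure_zero _ _ hsmallnull, zero_add]
      _ = ∑' j : ℕ, ∫⁻ ω in {ω | N ω = D + j}, (N ω : ℝ≥0∞) ∂P := by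
          rw [hUnion, lintegral_iUnion (fun j => hNkMeas (D + j)) hdisjN]
      _ = ∑' j : ℕ, ((D + j : ℕ) : ℝ≥0∞) * P {ω | N ω = D + j} := by
          refine tsum_congr fun j => ?_
          rw [setLIntegral_congr_fun (hNkMeas (D + j))
            (fun ⦃ω⦄ (hω : N ω = D + j) => by
              show (N ω : ℝ≥0∞) = ((D + j : ℕ) : ℝ≥0∞)
              exact congrArg _ hω),
            setLIntegral_const]
  -- Poisson identities
  have hstep : ∀ k : ℕ, ((k + 1 : ℕ) : ℝ≥0∞) * P {ω | N ω = k + 1} =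
      ENNReal.ofReal t * P {ω | N ω = k} := by
    intro k
    rw [hN, hN]
    rw [show ((k + 1 : ℕ) : ℝ≥0∞) = ENNReal.ofReal ((k + 1 : ℕ) : ℝ) from
      (ENNReal.ofReal_natCast _).symm]
    rw [← ENNReal.ofReal_mul (by positivity), ← ENNReal.ofReal_mul ht.le]
    congr 1
    have h2 : (Nat.factorial k : ℝ) ≠ 0 := by
      exact_mod_cast (Nat.factorial_ne_zero k)
    rw [Nat.factorial_succ]
    push_cast
    field_simp
    ring
  obtain ⟨E, rfl⟩ : ∃ E, D = E + 1 := ⟨D - 1, by omega⟩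
  -- Step 2: tail sum identity
  have key2 : ∑' j : ℕ, (((E + 1) + j : ℕ) : ℝ≥0∞) * P {ω | N ω = (E + 1) + j} ≤
      (((E + 1 : ℕ) : ℝ≥0∞) + ENNReal.ofReal t) * ∑' j : ℕ, P {ω | N ω = (E + 1) + j} := by
    have h1 : ∀ j : ℕ, (((E + 1) + j : ℕ) : ℝ≥0∞) * P {ω | N ω = (E + 1) + j} =
        ENNReal.ofReal t * P {ω | N ω = E + j} := by
      intro j
      have : (E + 1) + j = (E + j) + 1 := by omega
      rw [this]
      exact hstep (E + j)
    rw [tsum_congr h1, ENNReal.tsum_mul_left]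
    have h2 : ∑' j : ℕ, P {ω | N ω = E + j} =
        P {ω | N ω = E} + ∑' j : ℕ, P {ω | N ω = (E + 1) + j} := by
      rw [tsum_eq_zero_add' (f := fun j : ℕ => P {ω | N ω = E + j}) ENNReal.summable]
      congr 1
      refine tsum_congr fun j => ?_
      have he : E + (j + 1) = (E + 1) + j := by omega
      rw [he]
    rw [h2, mul_add]
    have h3 : ENNReal.ofReal t * P {ω | N ω = E} =
        ((E + 1 : ℕ) : ℝ≥0∞) * P {ω | N ω = E + 1} := (hstep E).symm
    have h4 : P {ω | N ω = E + 1} ≤ ∑' j : ℕ, P {ω | N ω = (E + 1) + j} := by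
      have := ENNReal.le_tsum (f := fun j : ℕ => P {ω | N ω = (E + 1) + j}) 0
      simpa using this
    calc ENNReal.ofReal t * P {ω | N ω = E} +
          ENNReal.ofReal t * ∑' j : ℕ, P {ω | N ω = (E + 1) + j}
        ≤ ((E + 1 : ℕ) : ℝ≥0∞) * (∑' j : ℕ, P {ω | N ω = (E + 1) + j}) +
          ENNReal.ofReal t * ∑' j : ℕ, P {ω | N ω = (E + 1) + j} := by
          rw [h3]
          exact add_le_add_left (mul_le_mul_right h4 _) _
      _ = (((E + 1 : ℕ) : ℝ≥0∞) + ENNReal.ofReal t) *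
            ∑' j : ℕ, P {ω | N ω = (E + 1) + j} := by ring
  -- Step 3: lower bound on the exit probability
  have key3 : ∑' j : ℕ, P {ω | N ω = (E + 1) + j} ≤ ((Δ : ℝ≥0∞)) ^ (E + 1) * P A := by
    obtain ⟨p, hp⟩ := hconn.exists_walk_length_eq_dist x y₀
    have hplen : p.length = E + 1 := by rw [hp, hy₀dist]
    set u : ℕ → V := p.getVert with hu
    have hu0 : u 0 = x := p.getVert_zero
    have huD : u (E + 1) = y₀ := by rw [← hplen, hu]; exact p.getVert_length
    have huadj : ∀ i, i < E + 1 → G.Adj (u i) (u (i + 1)) := by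
      intro i hi
      exact p.adj_getVert_succ (by omega)
    -- lower bound on the cylinder probability along u
    have hq : ∀ m, m ≤ E + 1 → ((Δ : ℝ≥0∞))⁻¹ ^ m ≤ P {ω | ∀ i ≤ m, X i ω = u i} := by
      intro m hm
      induction m with
      | zero =>
        have : {ω | ∀ i ≤ 0, X i ω = u i} = {ω | X 0 ω = x} := by
          ext ω; simp [Nat.le_zero, hu0]
        rw [this, hX0, pow_zero]
      | succ m ih =>
        have hm' : m ≤ E + 1 := by omega
        have hadj : G.Adj (u m) (u (m + 1)) := huadj m (by omega)
        rw [hmarkov m u, if_pos hadj, pow_succ]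
        refine mul_le_mul' (ih hm') ?_
        rw [ENNReal.inv_le_inv]
        exact_mod_cast hdeg (u m)
    -- the exit event contains the disjoint union of the events C j
    have hCsub : ∀ j : ℕ, ({ω | N ω = (E + 1) + j} ∩ {ω | ∀ i ≤ E + 1, X i ω = u i}) ⊆ A := by
      intro j ω ⟨h1, h2⟩
      refine ⟨E + 1, by simp only [Set.mem_setOf_eq] at h1; omega, ?_⟩
      rw [h2 (E + 1) le_rfl, huD]
      exact hy₀
    have hCdisj : Pairwise (Function.onFun Disjoint fun j : ℕ =>
        {ω | N ω = (E + 1) + j} ∩ {ω | ∀ i ≤ E + 1, X i ω = u i}) := by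
      intro i j hij
      refine Set.disjoint_left.mpr fun ω h1 h2 => hij ?_
      have := h1.1; have := h2.1
      simp only [Set.mem_setOf_eq] at *
      omega
    have hCmeas : ∀ j : ℕ, MeasurableSet
        ({ω | N ω = (E + 1) + j} ∩ {ω | ∀ i ≤ E + 1, X i ω = u i}) :=
      fun j => (hNkMeas _).inter (hCylMeas _ _)
    have hlow : (∑' j : ℕ, P {ω | N ω = (E + 1) + j}) * ((Δ : ℝ≥0∞))⁻¹ ^ (E + 1) ≤ P A := by
      calc (∑' j : ℕ, P {ω | N ω = (E + 1) + j}) * ((Δ : ℝ≥0∞))⁻¹ ^ (E + 1)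
          = ∑' j : ℕ, P {ω | N ω = (E + 1) + j} * ((Δ : ℝ≥0∞))⁻¹ ^ (E + 1) := by
            rw [ENNReal.tsum_mul_right]
        _ ≤ ∑' j : ℕ, P ({ω | N ω = (E + 1) + j} ∩ {ω | ∀ i ≤ E + 1, X i ω = u i}) := by
            refine ENNReal.tsum_le_tsum fun j => ?_
            rw [hindep ((E + 1) + j) (E + 1) u]
            exact mul_le_mul_right (hq (E + 1) le_rfl) _
        _ = P (⋃ j : ℕ, ({ω | N ω = (E + 1) + j} ∩ {ω | ∀ i ≤ E + 1, X i ω = u i})) :=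
            (measure_iUnion hCdisj hCmeas).symm
        _ ≤ P A := measure_mono (Set.iUnion_subset hCsub)
    calc ∑' j : ℕ, P {ω | N ω = (E + 1) + j}
        = ((Δ : ℝ≥0∞)) ^ (E + 1) *
            ((∑' j : ℕ, P {ω | N ω = (E + 1) + j}) * ((Δ : ℝ≥0∞))⁻¹ ^ (E + 1)) := by
          rw [← mul_assoc, mul_comm (((Δ : ℝ≥0∞)) ^ (E + 1)) _, mul_assoc, ← mul_pow,
            ENNReal.mul_inv_cancel hΔ0 (by simp), one_pow, mul_one]
      _ ≤ ((Δ : ℝ≥0∞)) ^ (E + 1) * P A := mul_le_mul_right hlow _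
  -- put everything together
  have hconst : ENNReal.ofReal ((Δ : ℝ) ^ (E + 1) * (t + ((E + 1 : ℕ) : ℝ))) =
      (((E + 1 : ℕ) : ℝ≥0∞) + ENNReal.ofReal t) * ((Δ : ℝ≥0∞)) ^ (E + 1) := by
    rw [ENNReal.ofReal_mul (by positivity), ENNReal.ofReal_pow (by positivity),
      ENNReal.ofReal_natCast, ENNReal.ofReal_add ht.le (by positivity),
      ENNReal.ofReal_natCast]
    ring
  calc ∫⁻ ω in A, (N ω : ℝ≥0∞) ∂P
      ≤ ∑' j : ℕ, (((E + 1) + j : ℕ) : ℝ≥0∞) * P {ω | N ω = (E + 1) + j} := key1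
    _ ≤ (((E + 1 : ℕ) : ℝ≥0∞) + ENNReal.ofReal t) * ∑' j : ℕ, P {ω | N ω = (E + 1) + j} :=
        key2
    _ ≤ (((E + 1 : ℕ) : ℝ≥0∞) + ENNReal.ofReal t) * (((Δ : ℝ≥0∞)) ^ (E + 1) * P A) :=
        mul_le_mul_right key3 _
    _ = ENNReal.ofReal ((Δ : ℝ) ^ (E + 1) * (t + ((E + 1 : ℕ) : ℝ))) * P A := by
        rw [hconst]; ring
end

section
/- Let $(\Delta_k)_{k \ge 1}$ be a sequence of random variables adapted to a filtration $(\mathcal{F}_k)$ and let $\tau$ be a stopping time, such that on $\{\tau \ge k\}$, $\mathbb{P}(\Delta_k \ge b \mid \mathcal{F}_{k-1}) \ge q$ for constants $b > 0$, $q \in (0,1]$. Let $S_k = \sum_{i=1}^{k \wedge \tau} \Delta_i$ (with $\Delta_i \ge 0$). Then for any $k \ge 1$, $\mathbb{P}(S_k < k, \tau \ge k) \le \mathbb{P}(b \sum_{i=1}^k X_i < k)$, where $(X_i)$ are i.i.d. Bernoulli($q$). -/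
open MeasureTheory ENNReal


noncomputable def binCdf (q r : ℝ≥0∞) : ℕ → ℕ → ℝ≥0∞
  | 0, _ => 1
  | n+1, 0 => r * binCdf q r n 0
  | n+1, m+1 => q * binCdf q r n m + r * binCdf q r n (m+1)

lemma binCdf_eq (q r : ℝ≥0∞) (n m : ℕ) :
    binCdf q r n m = ∑ j ∈ Finset.range (n+1),
      if j ≤ m then (n.choose j : ℝ≥0∞) * q ^ j * r ^ (n - j) else 0 := by
  induction n generalizing m with
  | zero => simp [binCdf]
  | succ n ih =>
    cases m with
    | zero =>
      rw [show binCdf q r (n+1) 0 = r * binCdf q r n 0 from rfl, ih]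
      simp only [Nat.le_zero]
      rw [Finset.sum_ite_eq' (Finset.range (n+1)) 0, Finset.sum_ite_eq' (Finset.range (n+2)) 0]
      simp [pow_succ, mul_comm]
    | succ m =>
      rw [show binCdf q r (n+1) (m+1) = q * binCdf q r n m + r * binCdf q r n (m+1) from rfl,
        ih, ih]
      rw [Finset.sum_range_succ' (fun j => if j ≤ m + 1 then ((n+1).choose j : ℝ≥0∞) * q ^ j * r ^ (n + 1 - j) else 0) (n+1)]
      have h0 : (if 0 ≤ m + 1 then ((n+1).choose 0 : ℝ≥0∞) * q ^ 0 * r ^ (n + 1 - 0) else 0) = r ^ (n+1) := by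
        simp
      rw [h0]
      have hterm : ∀ j, (if j + 1 ≤ m + 1 then ((n+1).choose (j+1) : ℝ≥0∞) * q ^ (j+1) * r ^ (n + 1 - (j+1)) else 0)
          = (if j ≤ m then (n.choose j : ℝ≥0∞) * q ^ (j+1) * r ^ (n - j) else 0)
            + (if j ≤ m then (n.choose (j+1) : ℝ≥0∞) * q ^ (j+1) * r ^ (n - j) else 0) := by
        intro j
        simp only [Nat.add_le_add_iff_right, Nat.succ_sub_succ, Nat.choose_succ_succ]
        split
        · push_cast; ring
        · simp
      simp only [hterm]
      rw [Finset.sum_add_distrib]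
      -- LHS: q * S(n,m) + r * S(n,m+1)
      have hq : q * ∑ j ∈ Finset.range (n+1), (if j ≤ m then (n.choose j : ℝ≥0∞) * q ^ j * r ^ (n - j) else 0)
          = ∑ j ∈ Finset.range (n+1), (if j ≤ m then (n.choose j : ℝ≥0∞) * q ^ (j+1) * r ^ (n - j) else 0) := by
        rw [Finset.mul_sum]
        refine Finset.sum_congr rfl fun j _ => ?_
        split
        · ring
        · simp
      have hr : r * ∑ j ∈ Finset.range (n+1), (if j ≤ m + 1 then (n.choose j : ℝ≥0∞) * q ^ j * r ^ (n - j) else 0)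
          = r ^ (n+1) + ∑ j ∈ Finset.range (n+1), (if j ≤ m then (n.choose (j+1) : ℝ≥0∞) * q ^ (j+1) * r ^ (n - j) else 0) := by
        rw [Finset.mul_sum]
        rw [Finset.sum_range_succ' (fun j => r * (if j ≤ m + 1 then (n.choose j : ℝ≥0∞) * q ^ j * r ^ (n - j) else 0)) n]
        have h0' : r * (if 0 ≤ m + 1 then (n.choose 0 : ℝ≥0∞) * q ^ 0 * r ^ (n - 0) else 0) = r ^ (n+1) := by
          simp [pow_succ, mul_comm]
        rw [h0', add_comm]
        congr 1
        rw [Finset.sum_range_succ (fun j => (if j ≤ m then (n.choose (j+1) : ℝ≥0∞) * q ^ (j+1) * r ^ (n - j) else 0)) n]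
        have hlast : (if n ≤ m then (n.choose (n+1) : ℝ≥0∞) * q ^ (n+1) * r ^ (n - n) else 0) = 0 := by
          simp [Nat.choose_succ_self]
        rw [hlast, add_zero]
        refine Finset.sum_congr rfl fun j hj => ?_
        simp only [Finset.mem_range] at hj
        simp only [Nat.add_le_add_iff_right]
        split
        · rw [show n - j = (n - (j+1)) + 1 by omega]
          ring
        · simp
      rw [hq, hr]
      ring


/-- Stochastic domination of adapted increments by i.i.d. Bernoulli sums: if on
`{τ ≥ k}` each increment `Δ_k` is at least `b` with conditional probability at least
`q` given `ℱ_{k-1}`, then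
`P(S_k < k, τ ≥ k) ≤ P(b ∑_{i=1}^k X_i < k)` for i.i.d. Bernoulli(q) `X_i`,
the right-hand side being the explicit binomial probability. -/
theorem adapted_increments_dominate_bernoulli
    {Ω : Type*} {m0 : MeasurableSpace Ω} (P : Measure Ω) [IsProbabilityMeasure P]
    (ℱ : Filtration ℕ m0)
    (Δ : ℕ → Ω → ℝ) (hΔnn : ∀ k ω, 0 ≤ Δ k ω)
    (hadapted : ∀ k, @Measurable Ω ℝ (ℱ k) _ (Δ k))
    (τ : Ω → ℕ∞) (hτ : ∀ k : ℕ, MeasurableSet[ℱ k] {ω | τ ω ≤ (k : ℕ∞)})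
    (b q : ℝ) (hb : 0 < b) (hq0 : 0 < q) (hq1 : q ≤ 1)
    (hcond : ∀ k : ℕ, 1 ≤ k → ∀ A : Set Ω, MeasurableSet[ℱ (k - 1)] A →
      ENNReal.ofReal q * P (A ∩ {ω | (k : ℕ∞) ≤ τ ω}) ≤
        P (A ∩ {ω | (k : ℕ∞) ≤ τ ω} ∩ {ω | b ≤ Δ k ω}))
    (k : ℕ) (hk : 1 ≤ k) :
    P {ω | (∑ i ∈ Finset.Icc 1 k, Δ i ω) < k ∧ (k : ℕ∞) ≤ τ ω} ≤
      ENNReal.ofReal (∑ j ∈ Finset.range (k + 1),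
        if b * j < k then (k.choose j : ℝ) * q ^ j * (1 - q) ^ (k - j) else 0) := by
  classical
  set q' := ENNReal.ofReal q with hq'def
  set r := ENNReal.ofReal (1 - q) with hrdef
  have hq1' : (0:ℝ) ≤ 1 - q := by linarith
  have hqr : q' + r = 1 := by
    rw [hq'def, hrdef, ← ENNReal.ofReal_add hq0.le hq1']
    simp
  -- counting process
  set N : ℕ → Ω → ℕ := fun n ω => ∑ i ∈ Finset.Icc 1 n, if b ≤ Δ i ω then 1 else 0 with hNdef
  have hNmeasF : ∀ n, Measurable[ℱ n] (N n) := by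
    intro n
    apply Finset.measurable_sum
    intro i hi
    have hiΔ : MeasurableSet[ℱ n] {ω | b ≤ Δ i ω} := by
      have : MeasurableSet[ℱ i] {ω | b ≤ Δ i ω} := hadapted i measurableSet_Ici
      exact ℱ.mono (Finset.mem_Icc.mp hi).2 _ this
    exact Measurable.ite hiΔ measurable_const measurable_const
  have hNsetmeas : ∀ n (s : Set ℕ), MeasurableSet[ℱ n] (N n ⁻¹' s) := by
    intro n s
    exact hNmeasF n (by trivial)
  have hNsucc : ∀ n ω, N (n+1) ω = N n ω + if b ≤ Δ (n+1) ω then 1 else 0 := by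
    intro n ω
    rw [hNdef]
    exact Finset.sum_Icc_succ_top (by omega) _
  -- T events
  set T : ℕ → Set Ω := fun n => {ω | (n : ℕ∞) ≤ τ ω} with hTdef
  have hTmeas : ∀ n, MeasurableSet (T n) := by
    intro n
    cases n with
    | zero =>
      have : T 0 = Set.univ := by
        ext ω; simp [hTdef]
      rw [this]; exact MeasurableSet.univ
    | succ n =>
      have : T (n+1) = {ω | τ ω ≤ (n : ℕ∞)}ᶜ := by
        ext ω
        simp only [hTdef, Set.mem_setOf_eq, Set.mem_compl_iff, not_le]
        rw [Nat.cast_succ]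
        exact ENat.add_one_le_iff (ENat.coe_ne_top n)
      rw [this]
      exact (ℱ.le n _ (hτ n)).compl
  have hTmono : ∀ n, T (n+1) ⊆ T n := by
    intro n ω h
    simp only [hTdef, Set.mem_setOf_eq] at h ⊢
    refine le_trans ?_ h
    exact_mod_cast Nat.cast_le.mpr (Nat.le_succ n)
  have hΔmeas : ∀ i, MeasurableSet {ω | b ≤ Δ i ω} :=
    fun i => ℱ.le i _ (hadapted i measurableSet_Ici)
  -- step lemma
  have step : ∀ (n : ℕ) (D : Set Ω), MeasurableSet[ℱ n] D →
      P (D ∩ T (n+1) ∩ {ω | Δ (n+1) ω < b}) ≤ r * P (D ∩ T (n+1)) := by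
    intro n D hD
    set A := D ∩ T (n+1) with hA
    have hAmeas : MeasurableSet A := (ℱ.le n _ hD).inter (hTmeas (n+1))
    have hsplit : P (A ∩ {ω | b ≤ Δ (n+1) ω}) + P (A \ {ω | b ≤ Δ (n+1) ω}) = P A :=
      measure_inter_add_diff A (hΔmeas (n+1))
    have hdiff : A \ {ω | b ≤ Δ (n+1) ω} = A ∩ {ω | Δ (n+1) ω < b} := by
      ext ω; simp [Set.mem_diff, not_le]
    rw [hdiff] at hsplit
    have hc : q' * P A ≤ P (A ∩ {ω | b ≤ Δ (n+1) ω}) := by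
      have := hcond (n+1) (by omega) D (by simpa using hD)
      simpa [hA, hTdef] using this
    have h1 : P (A ∩ {ω | b ≤ Δ (n+1) ω}) + P (A ∩ {ω | Δ (n+1) ω < b})
        ≤ P (A ∩ {ω | b ≤ Δ (n+1) ω}) + r * P A := by
      rw [hsplit]
      calc P A = (q' + r) * P A := by rw [hqr, one_mul]
        _ = q' * P A + r * P A := by rw [add_mul]
        _ ≤ P (A ∩ {ω | b ≤ Δ (n+1) ω}) + r * P A := add_le_add hc le_rfl
    exact (ENNReal.add_le_add_iff_left (measure_ne_top P _)).mp h1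
  -- main induction
  have key : ∀ n m : ℕ, P ({ω | N n ω ≤ m} ∩ T n) ≤ binCdf q' r n m := by
    intro n
    induction n with
    | zero => intro m; exact prob_le_one
    | succ n ih =>
      intro m
      cases m with
      | zero =>
        have hsub : {ω | N (n+1) ω ≤ 0} ∩ T (n+1) ⊆
            ({ω | N n ω ≤ 0} ∩ T (n+1)) ∩ {ω | Δ (n+1) ω < b} := by
          rintro ω ⟨h1, h2⟩
          have hs := hNsucc n ω
          simp only [Set.mem_setOf_eq] at h1
          by_cases hΔ : b ≤ Δ (n+1) ω
          · rw [if_pos hΔ] at hs; omega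
          · rw [if_neg hΔ] at hs
            exact ⟨⟨by simp only [Set.mem_setOf_eq]; omega, h2⟩, lt_of_not_ge hΔ⟩
        calc P ({ω | N (n+1) ω ≤ 0} ∩ T (n+1)) ≤
            P (({ω | N n ω ≤ 0} ∩ T (n+1)) ∩ {ω | Δ (n+1) ω < b}) := measure_mono hsub
          _ ≤ r * P ({ω | N n ω ≤ 0} ∩ T (n+1)) :=
              step n _ (hNsetmeas n {j | j ≤ 0})
          _ ≤ r * P ({ω | N n ω ≤ 0} ∩ T n) := by
              exact mul_le_mul_right (measure_mono (Set.inter_subset_inter_right _ (hTmono n))) _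
          _ ≤ r * binCdf q' r n 0 := mul_le_mul_right (ih 0) _
          _ = binCdf q' r (n+1) 0 := rfl
      | succ m =>
        set D : Set Ω := {ω | N n ω = m + 1} with hDdef
        have hDmeas : MeasurableSet[ℱ n] D := hNsetmeas n {m+1}
        have hsub : {ω | N (n+1) ω ≤ m+1} ∩ T (n+1) ⊆
            ({ω | N n ω ≤ m} ∩ T (n+1)) ∪ ((D ∩ T (n+1)) ∩ {ω | Δ (n+1) ω < b}) := by
          rintro ω ⟨h1, h2⟩
          have hs := hNsucc n ω
          simp only [Set.mem_setOf_eq] at h1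
          by_cases hNm : N n ω ≤ m
          · exact Or.inl ⟨hNm, h2⟩
          · right
            by_cases hΔ : b ≤ Δ (n+1) ω
            · rw [if_pos hΔ] at hs; omega
            · rw [if_neg hΔ] at hs
              refine ⟨⟨?_, h2⟩, lt_of_not_ge hΔ⟩
              simp only [hDdef, Set.mem_setOf_eq]; omega
        have hxy : P ({ω | N n ω ≤ m+1} ∩ T n) =
            P ({ω | N n ω ≤ m} ∩ T n) + P (D ∩ T n) := by
          rw [← measure_union]
          · congr 1
            ext ω
            simp only [Set.mem_inter_iff, Set.mem_union, Set.mem_setOf_eq, hDdef]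
            constructor
            · rintro ⟨h1, h2⟩
              rcases Nat.lt_or_ge (N n ω) (m+1) with h | h
              · exact Or.inl ⟨by omega, h2⟩
              · exact Or.inr ⟨by omega, h2⟩
            · rintro (⟨h1, h2⟩ | ⟨h1, h2⟩) <;> exact ⟨by omega, h2⟩
          · rw [Set.disjoint_left]
            rintro ω ⟨h1, _⟩ ⟨h2, _⟩
            simp only [Set.mem_setOf_eq] at h1
            simp only [hDdef, Set.mem_setOf_eq] at h2
            omega
          · exact ((ℱ.le n _ hDmeas).inter (hTmeas n))
        set x := P ({ω | N n ω ≤ m} ∩ T n) with hx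
        set y := P (D ∩ T n) with hy
        calc P ({ω | N (n+1) ω ≤ m+1} ∩ T (n+1))
            ≤ P (({ω | N n ω ≤ m} ∩ T (n+1)) ∪ ((D ∩ T (n+1)) ∩ {ω | Δ (n+1) ω < b})) :=
              measure_mono hsub
          _ ≤ P ({ω | N n ω ≤ m} ∩ T (n+1)) + P ((D ∩ T (n+1)) ∩ {ω | Δ (n+1) ω < b}) :=
              measure_union_le _ _
          _ ≤ x + r * P (D ∩ T (n+1)) := by
              refine add_le_add (measure_mono (Set.inter_subset_inter_right _ (hTmono n)))
                (step n D hDmeas)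
          _ ≤ x + r * y := by
              refine add_le_add_right (mul_le_mul_right
                (measure_mono (Set.inter_subset_inter_right _ (hTmono n))) _) _
          _ = q' * x + r * (x + y) := by
              have : x = q' * x + r * x := by rw [← add_mul, hqr, one_mul]
              rw [mul_add]
              calc x + r * y = (q' * x + r * x) + r * y := by rw [← this]
                _ = q' * x + (r * x + r * y) := by ring
          _ = q' * x + r * P ({ω | N n ω ≤ m+1} ∩ T n) := by rw [← hxy]
          _ ≤ q' * binCdf q' r n m + r * binCdf q' r n (m+1) :=
              add_le_add (mul_le_mul_right (ih m) _) (mul_le_mul_right (ih (m+1)) _)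
          _ = binCdf q' r (n+1) (m+1) := rfl
  -- choose threshold
  set m₁ := Nat.ceil ((k:ℝ)/b) with hm₁def
  have hm₁ : 1 ≤ m₁ := by
    rw [hm₁def, Nat.one_le_ceil_iff]
    positivity
  set m₀ := m₁ - 1 with hm₀def
  have hiff : ∀ j : ℕ, (b * j < k) ↔ j ≤ m₀ := by
    intro j
    rw [mul_comm, ← lt_div_iff₀ hb]
    constructor
    · intro h
      have : j < m₁ := Nat.lt_ceil.mpr h
      omega
    · intro h
      have : j < m₁ := by omega
      exact Nat.lt_ceil.mp this
  -- event inclusion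
  have hsubF : {ω | (∑ i ∈ Finset.Icc 1 k, Δ i ω) < k ∧ (k : ℕ∞) ≤ τ ω} ⊆
      {ω | N k ω ≤ m₀} ∩ T k := by
    rintro ω ⟨hS, hτω⟩
    refine ⟨?_, hτω⟩
    have hbN : b * (N k ω : ℝ) ≤ ∑ i ∈ Finset.Icc 1 k, Δ i ω := by
      have h1 : b * (N k ω : ℝ) = ∑ i ∈ Finset.Icc 1 k, (if b ≤ Δ i ω then b else 0) := by
        rw [hNdef]
        push_cast
        rw [Finset.mul_sum]
        refine Finset.sum_congr rfl fun i _ => ?_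
        split <;> simp
      rw [h1]
      refine Finset.sum_le_sum fun i _ => ?_
      split
      · assumption
      · exact hΔnn i ω
    have : b * (N k ω : ℝ) < k := lt_of_le_of_lt hbN hS
    exact (hiff (N k ω)).mp this
  -- final computation
  have hRHS : ENNReal.ofReal (∑ j ∈ Finset.range (k + 1),
      if b * j < k then (k.choose j : ℝ) * q ^ j * (1 - q) ^ (k - j) else 0)
      = binCdf q' r k m₀ := by
    rw [binCdf_eq]
    rw [ENNReal.ofReal_sum_of_nonneg]
    · refine Finset.sum_congr rfl fun j _ => ?_
      rw [if_congr (hiff j) rfl rfl]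
      split
      · rw [ENNReal.ofReal_mul (by positivity), ENNReal.ofReal_mul (by positivity),
          ENNReal.ofReal_pow hq0.le, ENNReal.ofReal_pow hq1', ENNReal.ofReal_natCast]
      · exact ENNReal.ofReal_zero
    · intro j _
      split
      · positivity
      · exact le_rfl
  rw [hRHS]
  exact le_trans (measure_mono hsubF) (key k m₀)
end
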